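/- There is a universal constant C such that for every nonnegative C³ L-periodic function η with η > 0, and all x: |η'(x)|² ≤ C ‖η''‖_{L²(0,L)}^{1/2} ‖η'''‖_{L²(0,L)}^{1/2} · η(x). -/

import Mathlib

open MeasureTheory intervalIntegral

/-!
Since `η'` is periodic, Rolle's theorem gives a zero `c` of `η''`. Integrating `(η''²)' = 2 η'' η'''`
from `c` over at most one period and applying Cauchy–Schwarz gives
`‖η''‖_∞² ≤ 2 ‖η''‖₂ ‖η'''‖₂`. On the other hand a nonnegative function `f` with `|f''| ≤ M`
satisfies `f'(x)² ≤ 4 M f(x)`: by Taylor, `0 ≤ f(x + t) ≤ f(x) + t f'(x) + M t²` for all `t`, so this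
quadratic in `t` has nonpositive discriminant. Take `f = η` and `M = √2 ‖η''‖₂^½ ‖η'''‖₂^½`.
-/

theorem Function.Periodic.deriv {f : ℝ → ℝ} {L : ℝ} (hf : Function.Periodic f L) :
    Function.Periodic (_root_.deriv f) L := fun x => by
  rw [← deriv_comp_add_const, funext hf]

theorem Function.Periodic.exists_deriv_eq_zero {f : ℝ → ℝ} {L : ℝ} (hf : Function.Periodic f L)
    (hL : 0 < L) (hd : Differentiable ℝ f) : ∃ c, _root_.deriv f c = 0 :=
  let ⟨c, _, hc⟩ :=
    _root_.exists_deriv_eq_zero hL hd.continuous.continuousOn (by simpa using (hf 0).symm)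
  ⟨c, hc⟩

theorem intervalIntegral.sq_integral_mul_le {f g : ℝ → ℝ} {a b : ℝ} (hab : a ≤ b)
    (hf : Continuous f) (hg : Continuous g) :
    (∫ x in a..b, f x * g x) ^ 2 ≤ (∫ x in a..b, f x ^ 2) * ∫ x in a..b, g x ^ 2 := by
  have hquad : ∀ t : ℝ, 0 ≤ (∫ x in a..b, f x ^ 2) * (t * t)
      + 2 * (∫ x in a..b, f x * g x) * t + ∫ x in a..b, g x ^ 2 := fun t => by
    have hexp : (fun x => (t * f x + g x) ^ 2)
        = fun x => t * t * f x ^ 2 + (2 * t * (f x * g x) + g x ^ 2) := by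
      ext x; ring
    have hnonneg : 0 ≤ ∫ x in a..b, (t * f x + g x) ^ 2 :=
      integral_nonneg hab fun x _ => sq_nonneg _
    rw [hexp, integral_add, integral_add, integral_const_mul, integral_const_mul] at hnonneg
    · linarith
    all_goals apply Continuous.intervalIntegrable; fun_prop
  have := discrim_le_zero hquad
  rw [discrim] at this
  linarith

theorem abs_sub_sub_mul_deriv_le {f : ℝ → ℝ} {M : ℝ} (hf : Differentiable ℝ f)
    (hf' : Differentiable ℝ (deriv f)) (hM : ∀ y, |deriv (deriv f) y| ≤ M) (x t : ℝ) :
    |f (x + t) - f x - t * deriv f x| ≤ M * t ^ 2 := by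
  have hlip : ∀ y z, |deriv f y - deriv f z| ≤ M * |y - z| := fun y z => by
    simpa only [Real.norm_eq_abs] using Convex.norm_image_sub_le_of_norm_deriv_le
      (fun u _ => hf' u) (fun u _ => hM u) convex_univ (Set.mem_univ z) (Set.mem_univ y)
  have hφ : ∀ s, HasDerivAt (fun s => f (x + s) - f x - s * deriv f x)
      (deriv f (x + s) - deriv f x) s := fun s => by
    have hshift : HasDerivAt (fun s => f (x + s)) (deriv f (x + s)) s :=
      (hf (x + s)).hasDerivAt.comp_const_add x s
    exact (hshift.sub_const (f x)).sub (by simpa using (hasDerivAt_id s).mul_const (deriv f x))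
  have hφ' : ∀ s ∈ Set.Icc (-|t|) |t|, ‖deriv f (x + s) - deriv f x‖ ≤ M * |t| := fun s hs =>
    calc ‖deriv f (x + s) - deriv f x‖ ≤ M * |x + s - x| := hlip _ _
      _ ≤ M * |t| := by
        rw [add_sub_cancel_left]
        exact mul_le_mul_of_nonneg_left (abs_le.mpr hs) ((abs_nonneg _).trans (hM 0))
  have := (convex_Icc (-|t|) |t|).norm_image_sub_le_of_norm_hasDerivWithin_le
    (fun s _ => (hφ s).hasDerivWithinAt) hφ'
    ⟨neg_nonpos.mpr (abs_nonneg t), abs_nonneg t⟩ ⟨neg_abs_le t, le_abs_self t⟩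
  simpa [← sq, mul_assoc] using this

theorem sq_deriv_le_of_nonneg {f : ℝ → ℝ} {M : ℝ} (hf : Differentiable ℝ f)
    (hf' : Differentiable ℝ (deriv f)) (hM : ∀ y, |deriv (deriv f) y| ≤ M)
    (hnonneg : ∀ y, 0 ≤ f y) (x : ℝ) : deriv f x ^ 2 ≤ 4 * M * f x := by
  have hquad : ∀ t, 0 ≤ M * (t * t) + deriv f x * t + f x := fun t => by
    have := (abs_le.mp (abs_sub_sub_mul_deriv_le hf hf' hM x t)).2
    rw [← sq]
    linarith [hnonneg (x + t)]
  have := discrim_le_zero hquad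
  rw [discrim] at this
  linarith

theorem Function.Periodic.sq_le_of_apply_eq_zero {g : ℝ → ℝ} {L c : ℝ}
    (hg : Function.Periodic g L) (hL : 0 < L) (hg₁ : ContDiff ℝ 1 g) (hc : g c = 0) (y : ℝ) :
    g y ^ 2 ≤ 2 * √(∫ s in 0..L, g s ^ 2) * √(∫ s in 0..L, _root_.deriv g s ^ 2) := by
  have hcont := hg₁.continuous
  have hcont' := hg₁.continuous_deriv le_rfl
  have hshift : ∀ h : ℝ → ℝ, Function.Periodic h L → ∫ s in c..c + L, h s = ∫ s in 0..L, h s :=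
    fun h hh => by simpa using hh.intervalIntegral_add_eq c 0
  obtain ⟨m, ⟨hcz, hzL⟩, -⟩ := existsUnique_add_zsmul_mem_Ico hL y c
  have hftc : g (y + m • L) ^ 2 = ∫ s in c..y + m • L, 2 * g s * _root_.deriv g s := by
    rw [integral_eq_sub_of_hasDerivAt (f := fun s => g s ^ 2) (fun s _ => by
        simpa using ((hg₁.differentiable one_ne_zero) s).hasDerivAt.fun_pow 2)
      (by apply Continuous.intervalIntegrable; fun_prop), hc]
    ring
  calc g y ^ 2 = ∫ s in c..y + m • L, 2 * g s * _root_.deriv g s := by rw [← hftc, hg.zsmul m]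
    _ ≤ ∫ s in c..y + m • L, 2 * (|g s| * |_root_.deriv g s|) :=
        integral_mono_on hcz (by apply Continuous.intervalIntegrable; fun_prop)
          (by apply Continuous.intervalIntegrable; fun_prop) fun s _ => by
            rw [mul_assoc, ← abs_mul]; gcongr; exact le_abs_self _
    _ ≤ ∫ s in c..c + L, 2 * (|g s| * |_root_.deriv g s|) :=
        integral_mono_interval le_rfl hcz hzL.le (ae_of_all _ fun s => by positivity)
          (by apply Continuous.intervalIntegrable; fun_prop)
    _ ≤ 2 * (√(∫ s in c..c + L, |g s| ^ 2) * √(∫ s in c..c + L, |_root_.deriv g s| ^ 2)) := by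
        rw [intervalIntegral.integral_const_mul,
          ← Real.sqrt_mul' _ (integral_nonneg (by linarith) fun s _ => sq_nonneg _)]
        gcongr
        exact (le_abs_self _).trans (Real.abs_le_sqrt
          (sq_integral_mul_le (by linarith) hcont.abs hcont'.abs))
    _ = 2 * √(∫ s in 0..L, g s ^ 2) * √(∫ s in 0..L, _root_.deriv g s ^ 2) := by
        rw [mul_assoc]
        simp only [sq_abs, hshift (fun s => g s ^ 2) (hg.comp (· ^ 2)),
          hshift (fun s => _root_.deriv g s ^ 2) (hg.deriv.comp (· ^ 2))]

theorem Real.sqrt_sqrt_eq_rpow {x : ℝ} (hx : 0 ≤ x) : √(√x) = x ^ (1 / 4 : ℝ) := by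
  rw [Real.sqrt_eq_rpow, Real.sqrt_eq_rpow, ← Real.rpow_mul hx]
  norm_num

theorem stmt4 :
    ∃ C : ℝ, 0 < C ∧ ∀ L : ℝ, 0 < L → ∀ η : ℝ → ℝ, ContDiff ℝ 3 η →
      Function.Periodic η L → (∀ x, 0 < η x) → ∀ x,
      (deriv η x) ^ 2 ≤
        C * (∫ s in (0:ℝ)..L, (iteratedDeriv 2 η s) ^ 2) ^ ((1:ℝ)/4)
          * (∫ s in (0:ℝ)..L, (iteratedDeriv 3 η s) ^ 2) ^ ((1:ℝ)/4) * η x := by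
  refine ⟨4 * √2, by positivity, fun L hL η hη hper hpos x => ?_⟩
  simp only [iteratedDeriv_succ, iteratedDeriv_zero]
  have hg : ContDiff ℝ 1 (deriv (deriv η)) := hη.iterate_deriv' 1 2
  obtain ⟨c, hc⟩ := hper.deriv.exists_deriv_eq_zero hL
    ((hη.iterate_deriv' 2 1).differentiable two_ne_zero)
  have hsup := hper.deriv.deriv.sq_le_of_apply_eq_zero hL hg hc
  set A := ∫ s in 0..L, deriv (deriv η) s ^ 2
  set B := ∫ s in 0..L, deriv (deriv (deriv η)) s ^ 2
  have hA : 0 ≤ A := integral_nonneg hL.le fun s _ => sq_nonneg _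
  have hB : 0 ≤ B := integral_nonneg hL.le fun s _ => sq_nonneg _
  have hbound : ∀ y, |deriv (deriv η) y| ≤ √2 * A ^ (1 / 4 : ℝ) * B ^ (1 / 4 : ℝ) := fun y => by
    rw [← Real.sqrt_sqrt_eq_rpow hA, ← Real.sqrt_sqrt_eq_rpow hB, ← Real.sqrt_mul zero_le_two,
      ← Real.sqrt_mul (by positivity)]
    exact Real.abs_le_sqrt (hsup y)
  have hderiv := sq_deriv_le_of_nonneg (hη.differentiable three_ne_zero)
    ((hη.iterate_deriv' 2 1).differentiable two_ne_zero) hbound (fun y => (hpos y).le) x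
  linarith
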